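/- arXiv:1910.14521 — 4 statements merged into one kernel-verified Lean document; each statement's English description precedes it below -/
import Mathlib

section
/- For a Young diagram y with n blocks, at most d rows, k rows total, p distinct row lengths M_1 < ... < M_p, and l_q rows of length M_q, the number of strings in {1,...,d}^n whose multiset of value-multiplicities equals the row-length multiset of y is d! · n! / ((d-k)! · ∏_{q=1}^p (l_q! · (M_q!)^{l_q})). -/
/-!
The group `Perm β × Perm α` acts on strings `f : α → β` by `(σ, π) ↦ σ ∘ f ∘ π`. Two strings with
the same letter multiplicities differ by a permutation of positions, and two multiplicity functions
`β → ℕ` with the same number of letters of each multiplicity differ by a permutation of letters, so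
the strings of a given shape are exactly the images of any one of them, `f₀`. The pairs sending
`f₀` to a fixed `g` of that shape are counted by choosing `σ` among the permutations of letters
preserving multiplicities, `(d - k)! ∏ (l q)!` of them, and then `π` among the permutations of
positions inside each fiber of `g`, `∏ (M q)! ^ l q` of them. Hence
`#strings * (d - k)! ∏ (l q)! (M q)! ^ l q = #(Perm β × Perm α) = d! n!`.
-/

open Finset Equiv Nat

section FiberCard

variable {α β : Type*} [Fintype α] [DecidableEq β]

def fiberCard (f : α → β) (b : β) : ℕ := #{a | f a = b}

lemma fiberCard_eq_card_subtype (f : α → β) (b : β) :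
    fiberCard f b = Fintype.card {a // f a = b} :=
  (Fintype.card_subtype _).symm

lemma fiberCard_ne_zero_iff_mem_image {f : α → β} {b : β} :
    fiberCard f b ≠ 0 ↔ b ∈ univ.image f := by
  simp [fiberCard]

lemma fiberCard_comp_perm (f : α → β) (π : Perm α) : fiberCard (f ∘ π) = fiberCard f := by
  funext b
  simp only [fiberCard_eq_card_subtype]
  exact Fintype.card_congr (π.subtypeEquiv fun _ => Iff.rfl)

lemma fiberCard_perm_comp (σ : Perm β) (f : α → β) :
    fiberCard (σ ∘ f) = fiberCard f ∘ σ.symm := by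
  funext b
  simp only [fiberCard, Function.comp_apply, ← Equiv.eq_symm_apply]

lemma fiberCard_comp_of_forall_eq_iff {γ : Type*} [DecidableEq γ] {u : β → γ} {x : γ} {y : β}
    (h : ∀ b, u b = x ↔ b = y) (f : α → β) : fiberCard (u ∘ f) x = fiberCard f y := by
  simp only [fiberCard, Function.comp_apply, h]

lemma exists_fiberCard_eq [Fintype β] (c : β → ℕ) (hc : ∑ b, c b = Fintype.card α) :
    ∃ f : α → β, fiberCard f = c := by
  let e : α ≃ Σ b, Fin (c b) := Fintype.equivOfCardEq (by simp [hc])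
  refine ⟨fun a => (e a).1, funext fun b => ?_⟩
  rw [fiberCard_eq_card_subtype, ← Fintype.card_fin (c b)]
  exact Fintype.card_congr ((e.subtypeEquiv fun _ => Iff.rfl).trans (sigmaSubtype b))

lemma exists_perm_comp_eq_iff {f g : α → β} :
    (∃ π : Perm α, g ∘ π = f) ↔ fiberCard f = fiberCard g := by
  constructor
  · rintro ⟨π, rfl⟩
    exact fiberCard_comp_perm g π
  · intro h
    refine ⟨ofFiberEquiv fun b => Fintype.equivOfCardEq ?_, funext (ofFiberEquiv_map _)⟩
    rw [← fiberCard_eq_card_subtype, ← fiberCard_eq_card_subtype, h]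

lemma card_perm_comp_eq [DecidableEq α] {f g : α → β} (h : fiberCard f = fiberCard g) :
    Fintype.card {π : Perm α // g ∘ π = f} = ∏ b ∈ univ.image f, (fiberCard f b)! := by
  obtain ⟨π₀, hπ₀⟩ := exists_perm_comp_eq_iff.mpr h
  have e : {τ : Perm α // f ∘ τ = f} ≃ {π : Perm α // g ∘ π = f} :=
    (Equiv.mulLeft π₀).subtypeEquiv fun τ => by
      rw [coe_mulLeft, Perm.coe_mul, ← Function.comp_assoc, hπ₀]
  rw [← Fintype.card_congr e, DomMulAct.stabilizer_card']
  simp only [fiberCard_eq_card_subtype]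

end FiberCard

section Shape

variable {α β : Type*} [Fintype α] [Fintype β] [DecidableEq β]

/-- `shape f c` is the number of letters occurring exactly `c` times in `f`; for `c ≠ 0` it is the
number of rows of length `c` in the Young diagram of `f`. -/
def shape (f : α → β) : ℕ → ℕ := fiberCard (fiberCard f)

lemma shape_perm_comp_comp (f : α → β) (σ : Perm β) (π : Perm α) :
    shape (σ ∘ f ∘ π) = shape f := by
  rw [shape, fiberCard_perm_comp, fiberCard_comp_perm, fiberCard_comp_perm, shape]

lemma card_image_add_shape_zero (f : α → β) :
    #(univ.image f) + shape f 0 = Fintype.card β := by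
  have himage : univ.image f = ({b | ¬ fiberCard f b = 0} : Finset β) := by
    ext b
    rw [mem_filter, ← fiberCard_ne_zero_iff_mem_image]
    simp
  rw [himage, shape, fiberCard, add_comm, card_filter_add_card_filter_not, Finset.card_univ]

variable {p k : ℕ} {M l : Fin p → ℕ}

variable (k M l) in
def HasShape (f : α → β) : Prop :=
  #(univ.image f) = k ∧ ∀ q, shape f (M q) = l q

lemma shape_zero_of_hasShape {f : α → β} (hf : HasShape k M l f) :
    shape f 0 = Fintype.card β - k := by
  have := card_image_add_shape_zero f
  rw [hf.1] at this
  omega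

lemma shape_eq_zero_of_hasShape (hM : Function.Injective M) (hMpos : ∀ q, 0 < M q)
    (hrows : ∑ q, l q = k) {f : α → β} (hf : HasShape k M l f) {c : ℕ} (hc : c ≠ 0)
    (hcM : ∀ q, M q ≠ c) : shape f c = 0 := by
  -- the letters whose multiplicity is some `M q` already make up all `k` letters of `f`
  have hsub : ({b | fiberCard f b ∈ univ.image M} : Finset β) ⊆ univ.image f := by
    intro b hb
    obtain ⟨q, -, hq⟩ := mem_image.mp (mem_filter.mp hb).2
    rw [← fiberCard_ne_zero_iff_mem_image, ← hq]
    exact (hMpos q).ne'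
  have hcard : #{b | fiberCard f b ∈ univ.image M} = k := by
    rw [← sum_card_fiberwise_eq_card_filter, sum_image hM.injOn, ← hrows]
    exact sum_congr rfl fun q _ => hf.2 q
  have heq := eq_of_subset_of_card_le hsub (by rw [hf.1, hcard])
  rw [shape, fiberCard, Finset.card_eq_zero, filter_eq_empty_iff]
  intro b _ hb
  have hb' : b ∈ univ.image f := by
    rw [← fiberCard_ne_zero_iff_mem_image, hb]
    exact hc
  rw [← heq, mem_filter, hb, mem_image] at hb'
  obtain ⟨q, -, hq⟩ := hb'.2
  exact hcM q hq

lemma hasShape_iff_shape_eq (hM : Function.Injective M) (hMpos : ∀ q, 0 < M q)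
    (hrows : ∑ q, l q = k) {f₀ : α → β} (hf₀ : HasShape k M l f₀) {f : α → β} :
    HasShape k M l f ↔ shape f = shape f₀ := by
  constructor
  · intro hf
    funext c
    by_cases hc : c = 0
    · rw [hc, shape_zero_of_hasShape hf, shape_zero_of_hasShape hf₀]
    by_cases hcM : ∃ q, M q = c
    · obtain ⟨q, rfl⟩ := hcM
      rw [hf.2 q, hf₀.2 q]
    push Not at hcM
    rw [shape_eq_zero_of_hasShape hM hMpos hrows hf hc hcM,
      shape_eq_zero_of_hasShape hM hMpos hrows hf₀ hc hcM]
  · intro h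
    refine ⟨?_, fun q => h ▸ hf₀.2 q⟩
    have := card_image_add_shape_zero f
    have := card_image_add_shape_zero f₀
    rw [h, hf₀.1] at *
    omega

lemma prod_image_fiberCard_of_hasShape (hM : Function.Injective M) (hMpos : ∀ q, 0 < M q)
    (hrows : ∑ q, l q = k) {f : α → β} (hf : HasShape k M l f) (g : ℕ → ℕ → ℕ)
    (hg : ∀ c, g c 0 = 1) :
    ∏ c ∈ univ.image (fiberCard f), g c (shape f c)
      = g 0 (Fintype.card β - k) * ∏ q, g (M q) (l q) := by
  have hsub : univ.image (fiberCard f) ⊆ insert 0 (univ.image M) := by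
    intro c hc
    rw [← fiberCard_ne_zero_iff_mem_image] at hc
    by_contra hc'
    simp only [mem_insert, mem_image, mem_univ, true_and, not_or, not_exists] at hc'
    exact hc (shape_eq_zero_of_hasShape hM hMpos hrows hf hc'.1 hc'.2)
  have h0 : 0 ∉ univ.image M := by simpa using fun q => (hMpos q).ne'
  have hout : ∀ c ∉ univ.image (fiberCard f), g c (shape f c) = 1 := fun c hc => by
    rw [show shape f c = 0 from not_ne_iff.mp (fiberCard_ne_zero_iff_mem_image.not.mpr hc), hg]
  rw [prod_subset hsub fun c _ hc => hout c hc,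
    prod_insert h0, prod_image hM.injOn, shape_zero_of_hasShape hf]
  exact congrArg _ (prod_congr rfl fun q _ => by rw [hf.2 q])

lemma exists_hasShape (hM : Function.Injective M)
    (hMpos : ∀ q, 0 < M q) (hblocks : ∑ q, l q * M q = Fintype.card α) (hrows : ∑ q, l q = k)
    (hkd : k ≤ Fintype.card β) : ∃ f : α → β, HasShape k M l f := by
  -- first decide which letter gets which row (`none` for the unused letters), then fill the rows
  obtain ⟨r, hr⟩ := exists_fiberCard_eq (α := β) (β := Option (Fin p))
    (fun o => o.elim (Fintype.card β - k) l) (by simp [Fintype.sum_option, hrows, hkd])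
  let rowLength : Option (Fin p) → ℕ := fun o => o.elim 0 M
  have hsum : ∑ b, rowLength (r b) = Fintype.card α := by
    rw [← sum_fiberwise' univ r, ← hblocks, Fintype.sum_option]
    simp only [sum_const, smul_eq_mul]
    change fiberCard r none * 0 + ∑ q, fiberCard r (some q) * M q = _
    simp [hr]
  obtain ⟨f, hf⟩ := exists_fiberCard_eq (rowLength ∘ r) hsum
  have hshape (o : Option (Fin p)) : shape f (rowLength o) = fiberCard r o := by
    rw [shape, hf]
    refine fiberCard_comp_of_forall_eq_iff (fun o' => ?_) r
    cases o <;> cases o' <;> simp [rowLength, hM.eq_iff, (hMpos _).ne', (hMpos _).ne]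
  refine ⟨f, ?_, fun q => (hshape (some q)).trans (congrFun hr (some q))⟩
  have := card_image_add_shape_zero f
  rw [show shape f 0 = Fintype.card β - k from (hshape none).trans (congrFun hr none)] at this
  omega

end Shape

section Count

variable {α β : Type*} [Fintype α] [Fintype β] [DecidableEq α] [DecidableEq β]

lemma card_perm_pair_comp_eq {f g : α → β} (h : shape f = shape g) :
    #{x : Perm β × Perm α | x.1 ∘ f ∘ x.2 = g}
      = (∏ c ∈ univ.image (fiberCard f), (shape f c)!) * ∏ b, (fiberCard g b)! := by
  have hπ (σ : Perm β) : #{π : Perm α | σ ∘ f ∘ π = g}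
      = if fiberCard g = fiberCard (σ ∘ f) then ∏ b, (fiberCard g b)! else 0 := by
    change #{π : Perm α | (σ ∘ f) ∘ π = g} = _
    split_ifs with hσ
    · rw [← Fintype.card_subtype, card_perm_comp_eq hσ]
      exact prod_subset (subset_univ _) fun b _ hb => by
        rw [not_ne_iff.mp (fiberCard_ne_zero_iff_mem_image.not.mpr hb), factorial_zero]
    · rw [Finset.card_eq_zero, filter_eq_empty_iff]
      exact fun π _ hπ => hσ (exists_perm_comp_eq_iff.mp ⟨π, hπ⟩)
  have hσ : #{σ : Perm β | fiberCard g = fiberCard (σ ∘ f)}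
      = ∏ c ∈ univ.image (fiberCard f), (shape f c)! := by
    simp_rw [fiberCard_perm_comp, Equiv.eq_comp_symm]
    rw [← Fintype.card_subtype, card_perm_comp_eq h]
    rfl
  rw [card_filter, Fintype.sum_prod_type]
  simp_rw [← card_filter]
  rw [sum_congr rfl fun σ _ => hπ σ, ← sum_filter, sum_const, hσ, smul_eq_mul]

lemma card_perm_pair_comp_eq_of_hasShape {p k : ℕ} {M l : Fin p → ℕ} (hM : Function.Injective M)
    (hMpos : ∀ q, 0 < M q) (hrows : ∑ q, l q = k) {f g : α → β} (hf : HasShape k M l f)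
    (hg : HasShape k M l g) :
    #{x : Perm β × Perm α | x.1 ∘ f ∘ x.2 = g}
      = (Fintype.card β - k)! * ∏ q, (l q)! * (M q)! ^ l q := by
  have hshape : shape f = shape g := ((hasShape_iff_shape_eq hM hMpos hrows hf).mp hg).symm
  calc #{x : Perm β × Perm α | x.1 ∘ f ∘ x.2 = g}
      = (∏ c ∈ univ.image (fiberCard f), (shape f c)!)
          * ∏ c ∈ univ.image (fiberCard g), c ! ^ shape g c := by
        rw [card_perm_pair_comp_eq hshape, Finset.prod_comp (fun c => c !) (fiberCard g)]
        rfl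
    _ = ((Fintype.card β - k)! * ∏ q, (l q)!)
          * (0 ! ^ (Fintype.card β - k) * ∏ q, (M q)! ^ l q) := by
        congr 1
        · exact prod_image_fiberCard_of_hasShape hM hMpos hrows hf (fun _ m => m !)
            fun _ => factorial_zero
        · exact prod_image_fiberCard_of_hasShape hM hMpos hrows hg (fun c m => c ! ^ m)
            fun _ => pow_zero _
    _ = (Fintype.card β - k)! * ∏ q, (l q)! * (M q)! ^ l q := by
        rw [prod_mul_distrib, factorial_zero, one_pow, one_mul, mul_assoc]

end Count

theorem young_diagram_string_count_general (n d k p : ℕ) (M l : Fin p → ℕ)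
    (hM : StrictMono M) (hMpos : ∀ q, 0 < M q)
    (hblocks : ∑ q, l q * M q = n) (hrows : ∑ q, l q = k) (hkd : k ≤ d) :
    ((Finset.univ : Finset (Fin n → Fin d)).filter (fun f =>
        (Finset.univ.image f).card = k ∧
        ∀ q : Fin p,
          (Finset.univ.filter (fun v : Fin d =>
            (Finset.univ.filter (fun i => f i = v)).card = M q)).card = l q)).card
      * ((d - k).factorial * ∏ q, (l q).factorial * (M q).factorial ^ (l q))
      = d.factorial * n.factorial := by
  obtain ⟨f₀, hf₀⟩ := exists_hasShape (α := Fin n) (β := Fin d) hM.injective hMpos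
    (by rwa [Fintype.card_fin]) hrows (by rwa [Fintype.card_fin])
  -- every string of shape `(k, M, l)` has the same number of preimages under `(σ, π) ↦ σ ∘ f₀ ∘ π`
  rw [← sum_const_nat (f := fun g => #{x : Perm (Fin d) × Perm (Fin n) | x.1 ∘ f₀ ∘ x.2 = g})
      fun g hg => ?fiber, ← card_eq_sum_card_fiberwise fun x _ => ?maps]
  · simp [Fintype.card_perm]
  case fiber =>
    simpa using
      card_perm_pair_comp_eq_of_hasShape hM.injective hMpos hrows hf₀ (mem_filter.mp hg).2
  case maps =>
    exact mem_filter.mpr ⟨mem_univ _,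
      (hasShape_iff_shape_eq hM.injective hMpos hrows hf₀).mpr (shape_perm_comp_comp f₀ x.1 x.2)⟩

/-- For a Young diagram with `n` blocks, `k ≤ d` rows, `p` distinct row lengths
`M 0 < M 1 < ... < M (p-1)` (all positive), with `l q` rows of length `M q`
(so `∑ q, l q * M q = n` and `∑ q, l q = k`), the number of strings in
`{1,…,d}^n` whose multiset of value-multiplicities equals the multiset of row
lengths is `d! * n! / ((d-k)! * ∏ q, (l q)! * (M q)!^(l q))`, stated here in
product (denominator-cleared) form. -/
theorem young_diagram_string_count (n d k p : ℕ) (M l : Fin p → ℕ)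
    (hM : StrictMono M) (hMpos : ∀ q, 0 < M q) (hlpos : ∀ q, 0 < l q)
    (hblocks : ∑ q, l q * M q = n) (hrows : ∑ q, l q = k) (hkd : k ≤ d) :
    ((Finset.univ : Finset (Fin n → Fin d)).filter (fun f =>
        (Finset.univ.image f).card = k ∧
        ∀ q : Fin p,
          (Finset.univ.filter (fun v : Fin d =>
            (Finset.univ.filter (fun i => f i = v)).card = M q)).card = l q)).card
      * ((d - k).factorial * ∏ q, (l q).factorial * (M q).factorial ^ (l q))
      = d.factorial * n.factorial :=
  young_diagram_string_count_general n d k p M l hM hMpos hblocks hrows hkd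
end

section
/- For the rectangular Young-diagram state |y(k)⟩ with n particles on d sites, k rows of length n/k, with k < n/2, the single-particle reduced state is ρ_1 = I_d/d (maximally mixed). -/
/-!
Rectangularity is invariant under relabelling the alphabet, so the number of rectangular
strings with a given first letter does not depend on that letter; as the state is uniform on
rectangular strings, each diagonal entry of `ρ_1` is `1/d`. Off the diagonal, `a r` and `b r`
with `a ≠ b` are never both rectangular: `b` occurs `q` times in `b r`, hence `q - 1 ≥ 1` times
in `r` and in `a r`, where it would then have to occur `q` times as well.
-/

open Finset

def IsRectangular {ι α : Type*} [Fintype ι] [DecidableEq α] (k q : ℕ) (f : ι → α) : Prop :=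
  #(univ.image f) = k ∧ ∀ v ∈ univ.image f, #{i | f i = v} = q

section Rectangular

variable {ι α β : Type*} [Fintype ι] [DecidableEq α] [DecidableEq β] {k q : ℕ}

theorem isRectangular_iff_forall_card_fiber (f : ι → α) :
    IsRectangular k q f ↔ #(univ.image f) = k ∧ ∀ i, #{j | f j = f i} = q := by
  simp [IsRectangular]

theorem isRectangular_equiv_comp_iff (σ : α ≃ β) (f : ι → α) :
    IsRectangular k q (σ ∘ f) ↔ IsRectangular k q f := by
  simp only [isRectangular_iff_forall_card_fiber, Function.comp_apply, σ.injective.eq_iff,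
    ← image_image, card_image_of_injective _ σ.injective]

theorem exists_isRectangular [Fintype α] (hq : 0 < q) (hι : Fintype.card ι = k * q)
    (hk : k ≤ Fintype.card α) : ∃ f : ι → α, IsRectangular k q f := by
  obtain ⟨e⟩ := Function.Embedding.nonempty_of_card_le (α := Fin k) (β := α) (by simpa using hk)
  let E : ι ≃ Fin k × Fin q := Fintype.equivOfCardEq (by simpa using hι)
  refine ⟨fun i => e (E i).1, (isRectangular_iff_forall_card_fiber _).2 ⟨?_, fun i => ?_⟩⟩
  · have himage : univ.image (fun i => e (E i).1) = univ.map e := by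
      ext v
      simp only [mem_image, mem_univ, true_and, mem_map]
      exact ⟨fun ⟨i, hi⟩ => ⟨_, hi⟩, fun ⟨a, ha⟩ => ⟨E.symm (a, ⟨0, hq⟩), by simpa using ha⟩⟩
    simp [himage]
  · simp only [e.injective.eq_iff]
    rw [card_equiv E (t := {p | p.1 = (E i).1}) (by simp), ← univ_product_univ,
      filter_product_left (· = (E i).1)]
    simp [filter_eq']

theorem card_filter_cons_eq {m : ℕ} (a : α) (r : Fin m → α) (v : α) :
    #{x | (Fin.cons a r : Fin (m + 1) → α) x = v} = #{x | r x = v} + if a = v then 1 else 0 := by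
  simp only [card_filter, Fin.sum_univ_succ, Fin.cons_zero, Fin.cons_succ, add_comm]

theorem IsRectangular.not_cons_of_ne {m : ℕ} {a b : α} {r : Fin m → α} (hq : 1 < q) (hab : a ≠ b)
    (ha : IsRectangular k q (Fin.cons a r : Fin (m + 1) → α)) :
    ¬ IsRectangular k q (Fin.cons b r : Fin (m + 1) → α) := by
  intro hb
  have hb_count := ((isRectangular_iff_forall_card_fiber _).1 hb).2 0
  rw [Fin.cons_zero, card_filter_cons_eq, if_pos rfl] at hb_count
  obtain ⟨x, hx⟩ := card_pos.1 (show 0 < #{x | r x = b} by omega)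
  have ha_count := ((isRectangular_iff_forall_card_fiber _).1 ha).2 x.succ
  rw [Fin.cons_succ, (mem_filter.1 hx).2, card_filter_cons_eq, if_neg hab] at ha_count
  omega

end Rectangular

section PermInvariant

variable {α : Type*} [Fintype α] [DecidableEq α] {m : ℕ} {p : (Fin (m + 1) → α) → Prop}
  [DecidablePred p]

theorem card_filter_cons_eq_of_perm_invariant (hp : ∀ (σ : Equiv.Perm α) f, p (σ ∘ f) ↔ p f)
    (a b : α) : #{r | p (Fin.cons a r)} = #{r | p (Fin.cons b r)} :=
  card_equiv ((Equiv.refl _).arrowCongr (Equiv.swap a b)) fun r => by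
    simp only [mem_filter, mem_univ, true_and, ← hp (Equiv.swap a b) (Fin.cons a r), Fin.comp_cons,
      Equiv.swap_apply_left]
    rfl

theorem card_filter_eq_card_mul_of_perm_invariant (hp : ∀ (σ : Equiv.Perm α) f, p (σ ∘ f) ↔ p f)
    (a : α) : #{f | p f} = Fintype.card α * #{r | p (Fin.cons a r)} :=
  calc #{f | p f} = ∑ b, #{r | p (Fin.cons b r)} := by
        rw [card_filter, ← (Fin.consEquiv _).sum_comp, Fintype.sum_prod_type]
        simp only [card_filter]
        rfl
    _ = Fintype.card α * #{r | p (Fin.cons a r)} := by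
        simp [card_filter_cons_eq_of_perm_invariant hp _ a]

end PermInvariant

theorem sum_mul_conj_of_eq_ite_inv_sqrt {β γ : Type*} [Fintype β] (p : γ → Prop) [DecidablePred p]
    (N : ℕ) (ψ : γ → ℂ) (hψ : ∀ g, ψ g = if p g then ((√N)⁻¹ : ℝ) else 0) (u v : β → γ) :
    ∑ r, ψ (u r) * starRingEnd ℂ (ψ (v r)) = #{r | p (u r) ∧ p (v r)} / N := by
  have hterm : ∀ r, ψ (u r) * starRingEnd ℂ (ψ (v r))
      = (if p (u r) ∧ p (v r) then 1 else 0) * (N : ℂ)⁻¹ := by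
    intro r
    have hN : (((√N)⁻¹ : ℝ) : ℂ) * (((√N)⁻¹ : ℝ) : ℂ) = (N : ℂ)⁻¹ := by
      rw [← Complex.ofReal_mul, ← mul_inv, Real.mul_self_sqrt (Nat.cast_nonneg N)]; push_cast; rfl
    rw [hψ, hψ]
    split_ifs <;> simp_all
  simp only [hterm, ← sum_mul, sum_boole, div_eq_mul_inv]

/-- For the rectangular Young-diagram state `|y(k)⟩` with `n = m + 1` particles on
`d` sites (the normalized equal superposition of all strings with exactly `k`
distinct values, each occurring `n/k` times), with `k < n/2`, the one-party
reduced density matrix is the maximally mixed state `I_d / d`. -/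
theorem rectangular_state_one_party_marginal (d k m : ℕ) (hk : 0 < k)
    (hdvd : k ∣ (m + 1)) (hkn : 2 * k < m + 1) (hkd : k ≤ d)
    (P : (Fin (m + 1) → Fin d) → Prop) [DecidablePred P]
    (hP : ∀ f, P f ↔
      (Finset.univ.image f).card = k ∧
      ∀ v ∈ Finset.univ.image f,
        (Finset.univ.filter (fun i => f i = v)).card = (m + 1) / k)
    (ψ : (Fin (m + 1) → Fin d) → ℂ)
    (hψ : ∀ f, ψ f = if P f then
      ((Real.sqrt (((Finset.univ : Finset (Fin (m + 1) → Fin d)).filter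
        (fun g => P g)).card))⁻¹ : ℝ) else 0) :
    ∀ i j : Fin d,
      (∑ r : Fin m → Fin d,
          ψ (Fin.cons i r) * (starRingEnd ℂ) (ψ (Fin.cons j r)))
        = if i = j then (1 / d : ℂ) else 0 := by
  intro i j
  obtain ⟨q, hq⟩ := hdvd
  have hq1 : 1 < q := by nlinarith
  have hPrect : ∀ f, P f ↔ IsRectangular k q f := by
    simpa [IsRectangular, Nat.div_eq_of_eq_mul_right hk hq] using hP
  have hPperm : ∀ (σ : Equiv.Perm (Fin d)) f, P (σ ∘ f) ↔ P f := by
    simp [hPrect, isRectangular_equiv_comp_iff]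
  rw [sum_mul_conj_of_eq_ite_inv_sqrt P _ ψ hψ]
  split_ifs with hij
  · subst hij
    obtain ⟨f₀, hf₀⟩ := exists_isRectangular (ι := Fin (m + 1)) (α := Fin d) (k := k) (q := q) (by omega)
      (by simp [hq]) (by simpa using hkd)
    have hN := card_filter_eq_card_mul_of_perm_invariant hPperm i
    have hT : #{r | P (Fin.cons i r)} ≠ 0 := fun h => by
      rw [h, mul_zero, card_eq_zero, filter_eq_empty_iff] at hN
      exact hN (mem_univ _) ((hPrect f₀).2 hf₀)
    simp only [and_self, hN, Fintype.card_fin]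
    push_cast
    field_simp
  · rw [filter_false_of_mem fun r _ ⟨hi, hj⟩ =>
      ((hPrect _).1 hi).not_cons_of_ne hq1 hij ((hPrect _).1 hj)]
    simp
end

section
/- With ρ_{11} as above, the vector |λ_2⟩ = |12⟩ + |21⟩ + ((d-4)/(d-2))∑_{i>2}(|2i⟩+|i2⟩) − (2/(d-2))∑_{i≠j, i,j>2}|ij⟩ is an eigenvector of ρ_{11} with eigenvalue λ_2 = 2C_2 + 2(d-4)B_3 − 2(d-3)B_1. -/
/-!
On vectors `v` over ordered pairs that are symmetric and vanish on the diagonal, `ρ₁₁` acts by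
`(ρ₁₁ v)ᵢⱼ = B₁ ∑ v + 2 (C₂ - B₃) vᵢⱼ + 2 (B₃ - B₁) (rᵢ + rⱼ - vᵢⱼ)`, where `r` are the row sums
of `v`. The vector `|λ₂⟩` is `vᵢⱼ = (wᵢ + wⱼ) / (d - 2)` for the single-site vector
`w = 2 e_a + (d - 2) e_b - 1`, which sums to zero. Such a lift has row sums `r = w` and total
sum `0`, so `rᵢ + rⱼ = (d - 2) vᵢⱼ` and the formula collapses to `λ₂ vᵢⱼ`.
-/

open Finset Matrix

variable {ι R : Type*} [DecidableEq ι] [CommRing R]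

def siteSymmetricMatrix (C2 B3 B1 : R) : Matrix (ι × ι) (ι × ι) R :=
  fun (i, j) (k, l) =>
    if i = j ∨ k = l then 0
    else if (k, l) = (i, j) ∨ (k, l) = (j, i) then C2
    else if i = k ∨ i = l ∨ j = k ∨ j = l then B3
    else B1

/-- Off the diagonal, the entry `B₁`, `B₃` or `C₂` is recovered by inclusion–exclusion over the
index coincidences of `p` with `(i, j)`. -/
theorem siteSymmetricMatrix_apply_mul_eq {C2 B3 B1 : R} {v : ι × ι → R}
    (hdiag : ∀ i, v (i, i) = 0) {i j : ι} (hij : i ≠ j) (p : ι × ι) :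
    siteSymmetricMatrix C2 B3 B1 (i, j) p * v p =
      B1 * v p
        + (C2 - B3) * ((if p = (i, j) then v p else 0) + (if p = (j, i) then v p else 0))
        + (B3 - B1) * ((if p.1 = i then v p else 0) + (if p.1 = j then v p else 0)
            + (if p.2 = i then v p else 0) + (if p.2 = j then v p else 0)
            - (if p = (i, j) then v p else 0) - (if p = (j, i) then v p else 0)) := by
  obtain ⟨k, l⟩ := p
  rcases eq_or_ne k l with rfl | hkl
  · simp only [hdiag, ite_self, mul_zero, add_zero, sub_zero]
  have hji := hij.symm
  by_cases hki : k = i <;> by_cases hkj : k = j <;> by_cases hli : l = i <;>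
    by_cases hlj : l = j <;>
    simp only [siteSymmetricMatrix, Prod.mk.injEq, hki, hkj, hli, hlj, hij, hji, hkl,
      or_false, false_or, and_true, and_false, or_true, true_or, if_true, if_false] <;>
    first | ring1 | grind

theorem siteSymmetricMatrix_mulVec_apply_of_ne [Fintype ι] {C2 B3 B1 : R} {v : ι × ι → R}
    (hdiag : ∀ i, v (i, i) = 0) (hswap : ∀ i j, v (j, i) = v (i, j)) {i j : ι} (hij : i ≠ j) :
    (siteSymmetricMatrix C2 B3 B1 *ᵥ v) (i, j) =
      B1 * ∑ p, v p + 2 * (C2 - B3) * v (i, j)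
        + 2 * (B3 - B1) * (∑ l, v (i, l) + ∑ l, v (j, l) - v (i, j)) := by
  have hrow : ∀ c, ∑ p : ι × ι, (if p.1 = c then v p else 0) = ∑ l, v (c, l) := by
    intro c
    rw [Fintype.sum_prod_type, sum_eq_single c (fun k _ hk => by simp [hk]) (by simp)]
    simp
  have hcol : ∀ c, ∑ p : ι × ι, (if p.2 = c then v p else 0) = ∑ l, v (c, l) := by
    intro c
    simp [Fintype.sum_prod_type, hswap]
  simp only [mulVec, dotProduct, siteSymmetricMatrix_apply_mul_eq hdiag hij,
    sum_add_distrib, sum_sub_distrib, ← mul_sum, hrow, hcol, sum_ite_eq', mem_univ, if_true,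
    hswap i j]
  ring

theorem siteSymmetricMatrix_mulVec_apply_self [Fintype ι] (C2 B3 B1 : R) (v : ι × ι → R)
    (i : ι) : (siteSymmetricMatrix C2 B3 B1 *ᵥ v) (i, i) = 0 := by
  simp [mulVec, dotProduct, siteSymmetricMatrix]

section Lift

variable {K : Type*} [Field K] [Fintype ι]

/-- The normalisation `1 / (card ι - 2)` makes the row sums reproduce `w` when `∑ w = 0`. -/
def symmetricLift (w : ι → K) : ι × ι → K :=
  fun (i, j) => if i = j then 0 else (w i + w j) / (Fintype.card ι - 2)

theorem symmetricLift_apply_self (w : ι → K) (i : ι) : symmetricLift w (i, i) = 0 := by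
  simp [symmetricLift]

theorem symmetricLift_swap (w : ι → K) (i j : ι) :
    symmetricLift w (j, i) = symmetricLift w (i, j) := by
  simp only [symmetricLift, eq_comm (a := j), add_comm (w j)]

theorem sum_symmetricLift_row {w : ι → K} (hw : ∑ i, w i = 0) (hn : (Fintype.card ι : K) ≠ 2)
    (i : ι) : ∑ l, symmetricLift w (i, l) = w i := by
  have hn' : (Fintype.card ι : K) - 2 ≠ 0 := sub_ne_zero.mpr hn
  have hterm : ∀ l, symmetricLift w (i, l) = (w i + w l) / (Fintype.card ι - 2) -
      if i = l then 2 * w i / (Fintype.card ι - 2) else 0 := by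
    intro l
    simp only [symmetricLift]
    split_ifs with h
    · subst h; ring
    · ring
  simp only [hterm, sum_sub_distrib, sum_ite_eq, mem_univ, if_true, ← sum_div, sum_add_distrib,
    sum_const, card_univ, hw, nsmul_eq_mul]
  field_simp
  ring

theorem sum_symmetricLift {w : ι → K} (hw : ∑ i, w i = 0) (hn : (Fintype.card ι : K) ≠ 2) :
    ∑ p, symmetricLift w p = 0 := by
  rw [Fintype.sum_prod_type]
  simp only [sum_symmetricLift_row hw hn, hw]

theorem siteSymmetricMatrix_mulVec_symmetricLift (C2 B3 B1 : K) {w : ι → K}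
    (hw : ∑ i, w i = 0) (hn : (Fintype.card ι : K) ≠ 2) :
    siteSymmetricMatrix C2 B3 B1 *ᵥ symmetricLift w =
      (2 * C2 + 2 * ((Fintype.card ι : K) - 4) * B3 - 2 * ((Fintype.card ι : K) - 3) * B1) •
        symmetricLift w := by
  ext ⟨i, j⟩
  rcases eq_or_ne i j with rfl | hij
  · simp [siteSymmetricMatrix_mulVec_apply_self, symmetricLift_apply_self]
  rw [siteSymmetricMatrix_mulVec_apply_of_ne (symmetricLift_apply_self w) (symmetricLift_swap w)
    hij, sum_symmetricLift hw hn, sum_symmetricLift_row hw hn, sum_symmetricLift_row hw hn]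
  have hn' : (Fintype.card ι : K) - 2 ≠ 0 := sub_ne_zero.mpr hn
  simp only [symmetricLift, if_neg hij, Pi.smul_apply, smul_eq_mul]
  field_simp
  ring

end Lift

/-- The vector `|λ₂⟩ = |ab⟩ + |ba⟩ + ((d-4)/(d-2)) ∑_{i∉{a,b}} (|bi⟩+|ib⟩)
− (2/(d-2)) ∑_{i≠j, i,j∉{a,b}} |ij⟩` (for distinct sites `a, b`) is an
eigenvector of the site-symmetric matrix `ρ₁₁` with eigenvalue
`λ₂ = 2C₂ + 2(d-4)B₃ − 2(d-3)B₁`. -/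
theorem rho11_second_eigenvector (d : ℕ) (hd : 5 ≤ d) (C2 B3 B1 : ℝ)
    (ρ11 : Matrix (Fin d × Fin d) (Fin d × Fin d) ℝ)
    (hρ : ∀ i j k l : Fin d, ρ11 (i, j) (k, l) =
      if i = j ∨ k = l then 0
      else if (k, l) = (i, j) ∨ (k, l) = (j, i) then C2
      else if i = k ∨ i = l ∨ j = k ∨ j = l then B3
      else B1)
    (a b : Fin d) (hab : a ≠ b)
    (v : Fin d × Fin d → ℝ)
    (hv : ∀ i j : Fin d, v (i, j) =
      if (i, j) = (a, b) ∨ (i, j) = (b, a) then 1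
      else if (i = b ∧ j ≠ a ∧ j ≠ b) ∨ (j = b ∧ i ≠ a ∧ i ≠ b) then
        ((d : ℝ) - 4) / ((d : ℝ) - 2)
      else if i ≠ j ∧ i ≠ a ∧ i ≠ b ∧ j ≠ a ∧ j ≠ b then
        -(2 / ((d : ℝ) - 2))
      else 0) :
    ρ11.mulVec v
      = (2 * C2 + 2 * ((d : ℝ) - 4) * B3 - 2 * ((d : ℝ) - 3) * B1) • v := by
  set w : Fin d → ℝ := fun i =>
    (if i = a then 2 else 0) + (if i = b then (d : ℝ) - 2 else 0) - 1
  have hd2 : (Fintype.card (Fin d) : ℝ) ≠ 2 := by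
    rw [Fintype.card_fin]; exact_mod_cast (by omega : d ≠ 2)
  have hw : ∑ i, w i = 0 := by
    simp [w, sum_add_distrib, sum_sub_distrib]
  have hρ' : ρ11 = siteSymmetricMatrix C2 B3 B1 := by
    ext ⟨i, j⟩ ⟨k, l⟩; exact hρ i j k l
  have hv' : v = symmetricLift w := by
    ext ⟨i, j⟩
    have hd2' : (d : ℝ) - 2 ≠ 0 := by simpa [sub_ne_zero] using hd2
    have hba := hab.symm
    rw [hv]
    simp only [symmetricLift, w, Fintype.card_fin]
    by_cases hij : i = j <;> by_cases hia : i = a <;> by_cases hib : i = b <;>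
      by_cases hja : j = a <;> by_cases hjb : j = b <;>
      simp only [Prod.mk.injEq, hij, hia, hib, hja, hjb, hab, hba, if_true, if_false, and_true,
        and_false, true_and, false_and, or_false, false_or] <;>
      first | (field_simp; ring1) | grind
  rw [hρ', hv', siteSymmetricMatrix_mulVec_symmetricLift C2 B3 B1 hw hd2, Fintype.card_fin]
end

section
/- If the PSD matrix ρ_{11} defined by parameters C_2, B_3, B_1 as above is positive semidefinite, then both 2C_2 + 4(d-2)B_3 + (d-2)(d-3)B_1 ≥ 0 and 2C_2 + 2(d-4)B_3 − 2(d-3)B_1 ≥ 0; consequently, if B_3 ≥ 0 then −2C_2/(d-2)(d-3) − 4B_3/(d-3) ≤ B_1 ≤ C_2/(d-3) + ((d-4)/(d-3))B_3. -/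
/-!
On the pair vectors `y_w (i, j) = w i + w j` (`i ≠ j`, zero on the diagonal) the quadratic form
of `ρ₁₁` can be evaluated in closed form: writing `ρ₁₁` as `B₁` plus `B₃ - B₁` times the number of
indices two pairs share plus a correction on `{k, l} = {i, j}` turns the form into sums of
squares of row sums. The result splits `w` into its mean and its mean-zero part, on which `ρ₁₁`
acts by `λ₁` and `λ₂` respectively; testing positive semidefiniteness on `w = 1` and on
`w = e_a - e_b` gives `λ₁ ≥ 0` and `λ₂ ≥ 0`, and the bounds on `B₁` are these rearranged.
-/

open Finset Matrix

variable {ι : Type*} [DecidableEq ι]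

def IsRho11 (C2 B3 B1 : ℝ) (ρ : Matrix (ι × ι) (ι × ι) ℝ) : Prop :=
  ∀ i j k l : ι, ρ (i, j) (k, l) =
    if i = j ∨ k = l then 0
    else if (k, l) = (i, j) ∨ (k, l) = (j, i) then C2
    else if i = k ∨ i = l ∨ j = k ∨ j = l then B3
    else B1

def Rho11.eigenvalue₁ (n C2 B3 B1 : ℝ) : ℝ := 2 * C2 + 4 * (n - 2) * B3 + (n - 2) * (n - 3) * B1

def Rho11.eigenvalue₂ (n C2 B3 B1 : ℝ) : ℝ := 2 * C2 + 2 * (n - 4) * B3 - 2 * (n - 3) * B1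

def pairIncidence (p : ι × ι) (a : ι) : ℝ :=
  (if p.1 = a then 1 else 0) + (if p.2 = a then 1 else 0)

def pairSumVec (w : ι → ℝ) : ι × ι → ℝ := fun p => if p.1 = p.2 then 0 else w p.1 + w p.2

theorem pairSumVec_apply (w : ι → ℝ) (i j : ι) :
    pairSumVec w (i, j) = if i = j then 0 else w i + w j := rfl

theorem pairSumVec_swap (w : ι → ℝ) (p : ι × ι) : pairSumVec w p.swap = pairSumVec w p := by
  simp only [pairSumVec, Prod.fst_swap, Prod.snd_swap, eq_comm (a := p.2), add_comm]

variable [Fintype ι]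

theorem sum_ite_eq_zero_sub (i : ι) (f : ι → ℝ) :
    ∑ j, (if i = j then 0 else f j) = ∑ j, f j - f i := by
  rw [eq_sub_iff_add_eq, ← Fintype.sum_ite_eq i f, ← sum_add_distrib]
  exact sum_congr rfl fun j _ => by split_ifs <;> simp

theorem sum_pairIncidence_mul (i j k l : ι) :
    ∑ a, pairIncidence (i, j) a * pairIncidence (k, l) a =
      (if i = k then 1 else 0) + (if i = l then 1 else 0) + (if j = k then 1 else 0) +
        (if j = l then 1 else 0) := by
  simp only [pairIncidence, mul_add, mul_ite, mul_one, mul_zero, sum_add_distrib, sum_ite_eq,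
    mem_univ, if_true]
  ring

theorem sum_mul_pairIncidence (y : ι × ι → ℝ) (a : ι) :
    ∑ p, y p * pairIncidence p a = ∑ b, (y (a, b) + y (b, a)) := by
  rw [Fintype.sum_prod_type]
  show ∑ i, ∑ j, y (i, j) * ((if i = a then 1 else 0) + (if j = a then 1 else 0)) = _
  simp only [mul_add, mul_ite, mul_one, mul_zero, sum_add_distrib, sum_ite_irrel, sum_const_zero,
    sum_ite_eq', mem_univ, if_true]

variable {C2 B3 B1 : ℝ} {ρ : Matrix (ι × ι) (ι × ι) ℝ}

theorem IsRho11.apply_eq (hρ : IsRho11 C2 B3 B1 ρ) {p q : ι × ι} (hp : p.1 ≠ p.2)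
    (hq : q.1 ≠ q.2) :
    ρ p q = B1 + (B3 - B1) * ∑ a, pairIncidence p a * pairIncidence q a +
      (C2 - 2 * B3 + B1) * ((if p = q then 1 else 0) + (if p.swap = q then 1 else 0)) := by
  obtain ⟨i, j⟩ := p
  obtain ⟨k, l⟩ := q
  rw [hρ, sum_pairIncidence_mul]
  simp only [Prod.mk.injEq, Prod.swap_prod_mk] at hp hq ⊢
  split_ifs <;> grind

theorem IsRho11.dotProduct_mulVec_self (hρ : IsRho11 C2 B3 B1 ρ) {y : ι × ι → ℝ}
    (hy : ∀ i, y (i, i) = 0) :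
    y ⬝ᵥ ρ *ᵥ y = B1 * (∑ p, y p) ^ 2 + (B3 - B1) * ∑ a, (∑ b, (y (a, b) + y (b, a))) ^ 2 +
      (C2 - 2 * B3 + B1) * ∑ p, y p * (y p + y p.swap) := by
  have hy' : ∀ p : ι × ι, p.1 = p.2 → y p = 0 := by
    rintro ⟨i, j⟩ (rfl : i = j)
    exact hy i
  have hentry : ∀ p q, ρ p q * (y p * y q) =
      (B1 + (B3 - B1) * ∑ a, pairIncidence p a * pairIncidence q a +
        (C2 - 2 * B3 + B1) * ((if p = q then 1 else 0) + (if p.swap = q then 1 else 0))) *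
        (y p * y q) := by
    intro p q
    by_cases hp : p.1 = p.2
    · simp [hy' p hp]
    by_cases hq : q.1 = q.2
    · simp [hy' q hq]
    rw [hρ.apply_eq hp hq]
  have hconst : ∑ p, ∑ q, y p * y q = (∑ p, y p) ^ 2 := by
    rw [sq, sum_mul_sum]
  have hinc : ∑ p, ∑ q, (∑ a, pairIncidence p a * pairIncidence q a) * (y p * y q) =
      ∑ a, (∑ b, (y (a, b) + y (b, a))) ^ 2 := by
    simp only [← sum_mul_pairIncidence, sq, sum_mul_sum]
    rw [← sum_comm_cycle]
    simp only [sum_mul]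
    exact sum_congr rfl fun _ _ => sum_congr rfl fun _ _ => sum_congr rfl fun _ _ => by ring
  have hswap : ∑ p, ∑ q, ((if p = q then 1 else 0) + (if p.swap = q then 1 else 0)) *
      (y p * y q) = ∑ p, y p * (y p + y p.swap) := by
    simp [add_mul, sum_add_distrib, mul_add]
  calc y ⬝ᵥ ρ *ᵥ y = ∑ p, ∑ q, ρ p q * (y p * y q) := by
        simp only [dotProduct, mulVec, mul_sum]
        exact sum_congr rfl fun p _ => sum_congr rfl fun q _ => by ring
    _ = B1 * ∑ p, ∑ q, y p * y q +
        (B3 - B1) * ∑ p, ∑ q, (∑ a, pairIncidence p a * pairIncidence q a) * (y p * y q) +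
        (C2 - 2 * B3 + B1) * ∑ p, ∑ q,
          ((if p = q then 1 else 0) + (if p.swap = q then 1 else 0)) * (y p * y q) := by
        conv_rhs => simp only [mul_sum, ← sum_add_distrib]
        refine sum_congr rfl fun p _ => sum_congr rfl fun q _ => ?_
        rw [hentry]
        ring
    _ = _ := by rw [hconst, hinc, hswap]

theorem sum_pairSumVec_row (w : ι → ℝ) (a : ι) :
    ∑ b, pairSumVec w (a, b) = (Fintype.card ι - 2) * w a + ∑ b, w b := by
  simp only [pairSumVec_apply, sum_ite_eq_zero_sub, sum_add_distrib, sum_const, card_univ,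
    nsmul_eq_mul]
  ring

theorem sum_pairSumVec (w : ι → ℝ) :
    ∑ p, pairSumVec w p = 2 * (Fintype.card ι - 1) * ∑ a, w a := by
  simp only [Fintype.sum_prod_type, sum_pairSumVec_row, sum_add_distrib, ← mul_sum, sum_const,
    card_univ, nsmul_eq_mul]
  ring

theorem sum_pairSumVec_row_sq (w : ι → ℝ) :
    ∑ a, (∑ b, pairSumVec w (a, b)) ^ 2 =
      (Fintype.card ι - 2) ^ 2 * ∑ a, w a ^ 2 + (3 * Fintype.card ι - 4) * (∑ a, w a) ^ 2 := by
  simp only [sum_pairSumVec_row, add_sq, mul_pow, sum_add_distrib, ← mul_sum, ← sum_mul,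
    sum_const, card_univ, nsmul_eq_mul]
  ring

theorem sum_pairSumVec_sq (w : ι → ℝ) :
    ∑ p, pairSumVec w p ^ 2 = 2 * ((Fintype.card ι - 2) * ∑ a, w a ^ 2 + (∑ a, w a) ^ 2) := by
  have h : ∀ i j : ι, pairSumVec w (i, j) ^ 2 = if i = j then 0 else (w i + w j) ^ 2 := by
    intro i j
    rw [pairSumVec_apply]
    split_ifs <;> simp
  simp only [Fintype.sum_prod_type, h, sum_ite_eq_zero_sub]
  simp only [← two_mul, mul_pow, add_sq, sum_add_distrib, sum_sub_distrib, ← mul_sum, ← sum_mul,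
    sum_const, card_univ, nsmul_eq_mul]
  ring

theorem IsRho11.card_mul_dotProduct_mulVec_pairSumVec (hρ : IsRho11 C2 B3 B1 ρ) (w : ι → ℝ) :
    Fintype.card ι * (pairSumVec w ⬝ᵥ ρ *ᵥ pairSumVec w) =
      2 * (Fintype.card ι - 2) * Rho11.eigenvalue₂ (Fintype.card ι) C2 B3 B1 *
          (Fintype.card ι * ∑ a, w a ^ 2 - (∑ a, w a) ^ 2) +
        4 * (Fintype.card ι - 1) * Rho11.eigenvalue₁ (Fintype.card ι) C2 B3 B1 *
          (∑ a, w a) ^ 2 := by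
  have hrow : ∀ a, ∑ b, (pairSumVec w (a, b) + pairSumVec w (b, a)) =
      2 * ∑ b, pairSumVec w (a, b) :=
    fun a => by simp only [← pairSumVec_swap w (_, a), Prod.swap_prod_mk, ← two_mul, mul_sum]
  have hsym : ∑ p, pairSumVec w p * (pairSumVec w p + pairSumVec w p.swap) =
      2 * ∑ p, pairSumVec w p ^ 2 := by
    simp only [pairSumVec_swap, mul_sum]
    exact sum_congr rfl fun p _ => by ring
  rw [hρ.dotProduct_mulVec_self fun i => by simp [pairSumVec_apply], hsym, sum_pairSumVec,
    sum_pairSumVec_sq]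
  simp only [hrow, mul_pow, ← mul_sum, sum_pairSumVec_row_sq, Rho11.eigenvalue₁,
    Rho11.eigenvalue₂]
  ring

theorem IsRho11.eigenvalue₁_nonneg (hρ : IsRho11 C2 B3 B1 ρ) (hpsd : ρ.PosSemidef)
    (hn : 2 ≤ Fintype.card ι) : 0 ≤ Rho11.eigenvalue₁ (Fintype.card ι) C2 B3 B1 := by
  have hn' : (2 : ℝ) ≤ Fintype.card ι := by exact_mod_cast hn
  have hQ := hpsd.dotProduct_mulVec_nonneg (pairSumVec 1)
  rw [star_trivial] at hQ
  have h := hρ.card_mul_dotProduct_mulVec_pairSumVec 1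
  simp only [Pi.one_apply, one_pow, sum_const, card_univ, nsmul_eq_mul, mul_one] at h
  have hpos : (0 : ℝ) < 4 * (Fintype.card ι - 1) * Fintype.card ι ^ 2 := by
    have : (0 : ℝ) < Fintype.card ι - 1 := by linarith
    positivity
  have key : Fintype.card ι * (pairSumVec 1 ⬝ᵥ ρ *ᵥ pairSumVec 1) =
      4 * (Fintype.card ι - 1) * Fintype.card ι ^ 2 *
        Rho11.eigenvalue₁ (Fintype.card ι) C2 B3 B1 := by
    rw [h]; ring
  exact nonneg_of_mul_nonneg_right (key ▸ mul_nonneg (Nat.cast_nonneg _) hQ) hpos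

theorem IsRho11.eigenvalue₂_nonneg (hρ : IsRho11 C2 B3 B1 ρ) (hpsd : ρ.PosSemidef)
    (hn : 3 ≤ Fintype.card ι) : 0 ≤ Rho11.eigenvalue₂ (Fintype.card ι) C2 B3 B1 := by
  have hn' : (3 : ℝ) ≤ Fintype.card ι := by exact_mod_cast hn
  obtain ⟨a, b, hab⟩ := Fintype.exists_pair_of_one_lt_card (by omega : 1 < Fintype.card ι)
  set w : ι → ℝ := Pi.single a 1 - Pi.single b 1
  have hsum : ∑ x, w x = 0 := by simp [w]
  have hsq : ∑ x, w x ^ 2 = 2 := by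
    norm_num [w, Pi.single_apply, sub_sq, sum_add_distrib, sum_sub_distrib, hab.symm]
  have hQ := hpsd.dotProduct_mulVec_nonneg (pairSumVec w)
  rw [star_trivial] at hQ
  have h := hρ.card_mul_dotProduct_mulVec_pairSumVec w
  rw [hsum, hsq] at h
  have hpos : (0 : ℝ) < 4 * (Fintype.card ι - 2) * Fintype.card ι := by
    have : (0 : ℝ) < Fintype.card ι - 2 := by linarith
    positivity
  have key : Fintype.card ι * (pairSumVec w ⬝ᵥ ρ *ᵥ pairSumVec w) =
      4 * (Fintype.card ι - 2) * Fintype.card ι *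
        Rho11.eigenvalue₂ (Fintype.card ι) C2 B3 B1 := by
    rw [h]; ring
  exact nonneg_of_mul_nonneg_right (key ▸ mul_nonneg (Nat.cast_nonneg _) hQ) hpos

/-- If the site-symmetric matrix `ρ₁₁` (parameters `C₂, B₃, B₁`) is positive
semidefinite, then its eigenvalues `λ₁ = 2C₂ + 4(d-2)B₃ + (d-2)(d-3)B₁` and
`λ₂ = 2C₂ + 2(d-4)B₃ − 2(d-3)B₁` are nonnegative; consequently, if `B₃ ≥ 0`
then `−2C₂/((d-2)(d-3)) − 4B₃/(d-3) ≤ B₁ ≤ C₂/(d-3) + ((d-4)/(d-3))B₃`. -/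
theorem rho11_psd_eigenvalue_bounds (d : ℕ) (hd : 5 ≤ d) (C2 B3 B1 : ℝ)
    (ρ11 : Matrix (Fin d × Fin d) (Fin d × Fin d) ℝ)
    (hρ : ∀ i j k l : Fin d, ρ11 (i, j) (k, l) =
      if i = j ∨ k = l then 0
      else if (k, l) = (i, j) ∨ (k, l) = (j, i) then C2
      else if i = k ∨ i = l ∨ j = k ∨ j = l then B3
      else B1)
    (hpsd : ρ11.PosSemidef) :
    0 ≤ 2 * C2 + 4 * ((d : ℝ) - 2) * B3 + ((d : ℝ) - 2) * ((d : ℝ) - 3) * B1 ∧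
    0 ≤ 2 * C2 + 2 * ((d : ℝ) - 4) * B3 - 2 * ((d : ℝ) - 3) * B1 ∧
    (0 ≤ B3 →
      -(2 * C2 / (((d : ℝ) - 2) * ((d : ℝ) - 3))) - 4 * B3 / ((d : ℝ) - 3) ≤ B1 ∧
      B1 ≤ C2 / ((d : ℝ) - 3) + (((d : ℝ) - 4) / ((d : ℝ) - 3)) * B3) := by
  have hρ' : IsRho11 C2 B3 B1 ρ11 := hρ
  have h₁ := hρ'.eigenvalue₁_nonneg hpsd (by simp; omega)
  have h₂ := hρ'.eigenvalue₂_nonneg hpsd (by simp; omega)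
  simp only [Fintype.card_fin, Rho11.eigenvalue₁, Rho11.eigenvalue₂] at h₁ h₂
  have hd' : (5 : ℝ) ≤ d := by exact_mod_cast hd
  have hd₂ : (0 : ℝ) < d - 2 := by linarith
  have hd₃ : (0 : ℝ) < d - 3 := by linarith
  refine ⟨h₁, h₂, fun _ => ⟨?_, ?_⟩⟩
  · have h : -(2 * C2 / ((d - 2) * (d - 3))) - 4 * B3 / (d - 3) =
        B1 - (2 * C2 + 4 * (d - 2) * B3 + (d - 2) * (d - 3) * B1) / ((d - 2) * (d - 3)) := by
      field_simp
      ring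
    rw [h, sub_le_self_iff]
    exact div_nonneg h₁ (mul_pos hd₂ hd₃).le
  · rw [div_mul_eq_mul_div, ← add_div, le_div_iff₀ hd₃]
    linarith
end
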